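/- For every θ ∈ Q_n, init(ξ(θ)) = init(θ); and for every normalized labeled binary tree Υ = (T, σ) ∈ Nor_n with leaf labels σ(1), …, σ(n) from left to right, init(γ̃(Υ)) = σ. -/

import Mathlib

/-! Colored labeled binary trees.  Leaf labels are positive integers; colors are
natural numbers (the paper's color set ℙ = {1,2,…} is identified with ℕ via j ↦ j-1,
i.e. color index `i : ℕ` represents the paper's color `i+1`). -/

inductive CTree : Type
  | leaf (label : ℕ) : CTree
  | node (color : ℕ) (l r : CTree) : CTree
deriving DecidableEq

namespace CTree

/-- leaf labels from left to right -/
def leavesList : CTree → List ℕ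
  | leaf m => [m]
  | node _ l r => leavesList l ++ leavesList r

/-- the valency `v(x)`: smallest leaf label of the subtree -/
def minLeaf : CTree → ℕ
  | leaf m => m
  | node _ l r => min (minLeaf l) (minLeaf r)

/-- a tree is normalized if in every subtree the leftmost leaf carries the
smallest leaf label of the subtree. -/
def Normalized : CTree → Prop
  | leaf _ => True
  | node _ l r => Normalized l ∧ Normalized r ∧ minLeaf l < minLeaf r

/-- number of internal nodes with color `j` -/
def colorCount : CTree → ℕ → ℕ
  | leaf _, _ => 0
  | node c l r, j => (if c = j then 1 else 0) + colorCount l j + colorCount r j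

def isLeafB : CTree → Bool
  | leaf _ => true
  | node _ _ _ => false

def left : CTree → CTree
  | leaf m => leaf m
  | node _ l _ => l

def right : CTree → CTree
  | leaf m => leaf m
  | node _ _ r => r

def rootColor : CTree → ℕ
  | leaf _ => 0
  | node c _ _ => c

/-- the root of `T` is a Lyndon node: either the left child is a leaf
or `v(R(L(x))) > v(R(x))`. (Leaves count as Lyndon.) -/
def RootLyndonB (T : CTree) : Bool :=
  isLeafB T || isLeafB (left T) || decide (minLeaf (right T) < minLeaf (right (left T)))

/-- colored Lyndon condition: every internal node that is not a Lyndon node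
satisfies `color(L(x)) > color(x)` -/
def LynColored : CTree → Prop
  | leaf _ => True
  | node c l r => LynColored l ∧ LynColored r ∧
      (RootLyndonB (node c l r) = true ∨ c < rootColor l)

/-- colored comb condition: every internal node whose right child is internal
satisfies `color(x) > color(R(x))` -/
def CombColored : CTree → Prop
  | leaf _ => True
  | node c l r => CombColored l ∧ CombColored r ∧ (isLeafB r = true ∨ rootColor r < c)

/-- all colors equal to `0`: an (essentially) uncolored tree. -/
def Mono : CTree → Prop
  | leaf _ => True
  | node c l r => c = 0 ∧ Mono l ∧ Mono r

/-- the tree has leaf label set `[n] = {1,…,n}` (each label once) -/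
def OnSet (n : ℕ) (T : CTree) : Prop := T.leavesList.Perm ((List.range n).map (· + 1))

/-- `lynAux T = (b, m)`: `b` is the size of the block of `π^{Lyn}` containing the
root (`0` for a leaf) and `m` is the multiset of sizes of the other blocks. -/
def lynAux : CTree → ℕ × Multiset ℕ
  | leaf _ => (0, 0)
  | node c l r =>
    let bl := (lynAux l).1
    let ml := (lynAux l).2
    let br := (lynAux r).1
    let mr := (lynAux r).2
    let closedR := mr + (if br = 0 then 0 else {br})
    if RootLyndonB (node c l r) then
      (1, ml + (if bl = 0 then 0 else {bl}) + closedR)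
    else (1 + bl, ml + closedR)

/-- the Lyndon type `λ^{Lyn}`: multiset of block sizes of `π^{Lyn}` -/
def lynType (T : CTree) : Multiset ℕ :=
  (if (lynAux T).1 = 0 then (0 : Multiset ℕ) else {(lynAux T).1}) + (lynAux T).2

def combAux : CTree → ℕ × Multiset ℕ
  | leaf _ => (0, 0)
  | node _ l r =>
    let bl := (combAux l).1
    let ml := (combAux l).2
    let br := (combAux r).1
    let mr := (combAux r).2
    (1 + br, ml + mr + (if bl = 0 then 0 else {bl}))

/-- the comb type `λ^{Comb}`: multiset of block sizes of `π^{Comb}` -/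
def combType (T : CTree) : Multiset ℕ :=
  (if (combAux T).1 = 0 then (0 : Multiset ℕ) else {(combAux T).1}) + (combAux T).2

/-- subtrees (= nodes) of a tree -/
def subtreesC : CTree → List CTree
  | leaf m => [leaf m]
  | node c l r => node c l r :: (subtreesC l ++ subtreesC r)

end CTree

/-- normalized uncolored labeled binary trees on `[n]`: the set `Nor_n`. -/
def NorSet (n : ℕ) : Set CTree :=
  {T | T.OnSet n ∧ T.Normalized ∧ T.Mono}

/-- `Lyn_μ` for a weak composition `μ` (indexed by ℕ; `μ i` is the number of
internal nodes of color `i`). -/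
def LynSet (n : ℕ) (μ : ℕ →₀ ℕ) : Set CTree :=
  {T | T.OnSet n ∧ T.Normalized ∧ T.LynColored ∧ ∀ j, T.colorCount j = μ j}

/-- `Comb_μ` -/
def CombSet (n : ℕ) (μ : ℕ →₀ ℕ) : Set CTree :=
  {T | T.OnSet n ∧ T.Normalized ∧ T.CombColored ∧ ∀ j, T.colorCount j = μ j}

/-- `Lyn_μ` for `μ ∈ wcomp` with support in `[k]`, given as `f : Fin k → ℕ`. -/
def LynSetF (n k : ℕ) (f : Fin k → ℕ) : Set CTree :=
  {T | T.OnSet n ∧ T.Normalized ∧ T.LynColored ∧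
    ∀ j : ℕ, T.colorCount j = if h : j < k then f ⟨j, h⟩ else 0}

def CombSetF (n k : ℕ) (f : Fin k → ℕ) : Set CTree :=
  {T | T.OnSet n ∧ T.Normalized ∧ T.CombColored ∧
    ∀ j : ℕ, T.colorCount j = if h : j < k then f ⟨j, h⟩ else 0}

/-! Stirling permutations, as lists of natural numbers. -/

/-- `w` is a Stirling permutation on the finite set `A` of positive integers:
every letter of `A` occurs exactly twice, no other letter occurs, and every
letter lying strictly between the two occurrences of a letter `a` is larger
than `a`. -/
def IsStirling (A : Finset ℕ) (w : List ℕ) : Prop :=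
  (∀ a, w.count a = if a ∈ A then 2 else 0) ∧
  (∀ a b : ℕ, ∀ i l j : ℕ, i < l → l < j → w[i]? = some a → w[j]? = some a →
      w[l]? = some b → a < b)

/-- the set `Q_A` of Stirling permutations on `A` -/
def QSetA (A : Finset ℕ) : Set (List ℕ) := {w | IsStirling A w}

/-- the set `Q_m` of Stirling permutations on `[m]` -/
def QSet (m : ℕ) : Set (List ℕ) := QSetA (Finset.Icc 1 m)

/-- `(a,b)` is an ascending adjacent pair of `w`: `a < b` and the second
occurrence of `a` immediately precedes the first occurrence of `b`. -/
def AApair (w : List ℕ) (a b : ℕ) : Prop :=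
  a < b ∧ ∃ i, w[i]? = some a ∧ w[i+1]? = some b ∧
    (w.take (i+1)).count a = 2 ∧ (w.take (i+1)).count b = 0

/-- `(a,b)` is a terminally nested pair of `w`: `a < b` and the second
occurrence of `a` immediately follows the second occurrence of `b`. -/
def TNpair (w : List ℕ) (a b : ℕ) : Prop :=
  a < b ∧ ∃ i, w[i]? = some b ∧ w[i+1]? = some a ∧
    (w.take (i+1)).count b = 2 ∧ (w.take (i+2)).count a = 2

-- Given a relation `R` on letters which is a partial matching (as `AApair w`
-- and `TNpair w` are), the multiset of sizes of the blocks of the partition of `A`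
-- generated by `R`, i.e. the multiset of lengths of the maximal `R`-chains.
-- This gives the types `λ^{AA}` and `λ^{TN}` of a Stirling permutation.
open Classical in
noncomputable def chainType (A : Finset ℕ) (R : ℕ → ℕ → Prop) : Multiset ℕ :=
  ((A.image fun a => A.filter fun b => Relation.EqvGen R a b).val.map Finset.card)

/-- splits off the first block `a τ a` of a Stirling permutation. -/
def blockSplit (w : List ℕ) : List ℕ × List ℕ :=
  match w with
  | [] => ([], [])
  | a :: rest =>
    let i := rest.findIdx (· = a)
    (a :: rest.take (i+1), rest.drop (i+1))

/-- block factorization of a Stirling permutation (with fuel). -/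
def toBlocksAux : ℕ → List ℕ → List (List ℕ)
  | 0, _ => []
  | _+1, [] => []
  | f+1, w => (blockSplit w).1 :: toBlocksAux f (blockSplit w).2

def toBlocks (w : List ℕ) : List (List ℕ) := toBlocksAux w.length w

/-- splits a list of blocks at the first descent of the leading letters:
this gives the ascending adjacent factorization `θ = θ¹θ²`. -/
def splitAtDescent : List (List ℕ) → Option (List (List ℕ) × List (List ℕ))
  | [] => none
  | [_] => none
  | b :: b' :: rest =>
    if b'.headD 0 < b.headD 0 then some ([b], b' :: rest)
    else (splitAtDescent (b' :: rest)).map fun p => (b :: p.1, p.2)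

/-- the bijection `ξ : Q_A → Q_A` (with fuel).  On an irreducible AA-word
`a₁τ₁a₁ a₂τ₂a₂ ⋯ a_kτ_ka_k` it returns
`a₁ξ(τ₁) a₂ξ(τ₂) ⋯ a_{k-1}ξ(τ_{k-1}) a_k a_k a_{k-1} ⋯ a₂ a₁ ξ(τ_k)`, and it is
multiplicative on the complete ascending adjacent factorization. -/
def xiAux : ℕ → List ℕ → List ℕ
  | 0, w => w
  | f+1, w =>
    let bs := toBlocks w
    match splitAtDescent bs with
    | some p => xiAux f p.1.flatten ++ xiAux f p.2.flatten
    | none =>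
      match bs with
      | [] => []
      | _ =>
        let heads := bs.map fun b => b.headD 0
        let inners := bs.map fun b => (b.drop 1).dropLast
        (List.zipWith (fun a τ => a :: xiAux f τ) heads.dropLast inners.dropLast).flatten
          ++ (heads.getLastD 0 :: heads.reverse) ++ xiAux f (inners.getLastD [])

def xiMap (w : List ℕ) : List ℕ := xiAux (w.length + 1) w

/-- the subword of first occurrences of the letters of `w` (with fuel). -/
def initAux : ℕ → List ℕ → List ℕ
  | 0, _ => []
  | _+1, [] => []
  | f+1, a :: rest => a :: initAux f (rest.filter (· ≠ a))

/-- the initial permutation `init(θ)` -/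
def initPerm (w : List ℕ) : List ℕ := initAux w.length w

namespace CTree

/-- the map `γ̃ : Nor_A → Q̂_A` (recursive definition). -/
def gammaT : CTree → List ℕ
  | leaf m => [m, m]
  | node _ l r => (gammaT l).dropLast ++ gammaT r ++ [minLeaf l]

end CTree

/-! The initial permutation is `List.eraseDups`, and `eraseDups (u ++ v)` depends only on
`eraseDups u` and `eraseDups v`; moreover letters whose first occurrence lies further left can be
inserted or deleted without changing it. For `ξ` this gives an induction along the block structure
of a Stirling permutation: on an irreducible AA-word the factor `a_i ξ(τ_i)` has the initial
permutation of `a_i τ_i a_i`, and the run `a_k a_{k-1} ⋯ a_1` consists of letters already seen.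
For `γ̃`, each recursive step only appends a letter already present, so `init(γ̃ Υ)` is the leaf
word with duplicates erased, which is `σ` itself. -/

namespace List

variable {α : Type*} [BEq α] [LawfulBEq α]

theorem eraseDups_filter (p : α → Bool) (l : List α) :
    (l.filter p).eraseDups = l.eraseDups.filter p := by
  match l with
  | [] => rfl
  | a :: as =>
    have : (as.filter fun b => !b == a).length < as.length + 1 :=
      Nat.lt_add_one_of_le (length_filter_le _ _)
    by_cases ha : p a
    · rw [filter_cons_of_pos ha, eraseDups_cons, eraseDups_cons, filter_cons_of_pos ha,
        filter_filter, ← eraseDups_filter, filter_filter]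
      simp only [Bool.and_comm]
    · rw [filter_cons_of_neg ha, eraseDups_cons, filter_cons_of_neg ha, ← eraseDups_filter,
        filter_filter]
      congr 1
      refine filter_congr fun b _ => ?_
      by_cases hb : b = a
      · subst hb; simp [ha]
      · simp [hb]
termination_by l.length

theorem eraseDups_append_congr {u u' v v' : List α} (hu : u.eraseDups = u'.eraseDups)
    (hv : v.eraseDups = v'.eraseDups) : (u ++ v).eraseDups = (u' ++ v').eraseDups := by
  have hmem : ∀ x, x ∈ u ↔ x ∈ u' := fun x => by rw [← mem_eraseDups, hu, mem_eraseDups]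
  simp only [eraseDups_append, removeAll, eraseDups_filter, hu, hv, elem_eq_mem, hmem]

theorem eraseDups_append_of_subset {u v : List α} (h : v ⊆ u) :
    (u ++ v).eraseDups = u.eraseDups := by
  rw [eraseDups_append, removeAll, filter_eq_nil_iff.mpr fun x hx => by simp [h hx], eraseDups_nil,
    append_nil]

theorem eraseDups_eq_self_of_nodup : ∀ {l : List α}, l.Nodup → l.eraseDups = l
  | [], _ => rfl
  | a :: as, h => by
    rw [nodup_cons] at h
    rw [eraseDups_cons, filter_eq_self.mpr, eraseDups_eq_self_of_nodup h.2]
    intro b hb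
    simpa using ne_of_mem_of_not_mem hb h.1

theorem eraseDups_flatten_map_congr {β : Type*} {f : β → List α} {g : β → List α} :
    ∀ {L : List β}, (∀ B ∈ L, (f B).eraseDups = (g B).eraseDups) →
      ((L.map f).flatten).eraseDups = ((L.map g).flatten).eraseDups
  | [], _ => rfl
  | B :: L, h => by
    simp only [map_cons, flatten_cons]
    exact eraseDups_append_congr (h B mem_cons_self)
      (eraseDups_flatten_map_congr fun B' hB' => h B' (mem_cons_of_mem B hB'))

end List

open List

theorem initAux_eq_eraseDups : ∀ {f : ℕ} {w : List ℕ}, w.length ≤ f → initAux f w = w.eraseDups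
  | 0, [], _ | _ + 1, [], _ => rfl
  | f + 1, a :: rest, h => by
    rw [initAux, eraseDups_cons,
      initAux_eq_eraseDups ((length_filter_le _ _).trans (Nat.le_of_lt_succ h))]
    congr 3
    funext b
    rw [Bool.eq_iff_iff]
    simp

theorem initPerm_eq_eraseDups (w : List ℕ) : initPerm w = w.eraseDups :=
  initAux_eq_eraseDups le_rfl

/-- The shape of a Stirling permutation that `ξ` uses: it factors into blocks `a τ a`
with `a ∉ τ`, recursively. -/
inductive Nested {α : Type*} : List α → Prop
  | nil : Nested []
  | block {a : α} {τ z : List α} : a ∉ τ → Nested τ → Nested z → Nested (a :: τ ++ a :: z)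

namespace Nested

variable {α : Type*} [LinearOrder α]

theorem of_count_eq_two {w : List α} (hcount : ∀ a ∈ w, w.count a = 2)
    (hbetween : ∀ a b, [a, b, a] <+ w → a < b) : Nested w := by
  match w with
  | [] => exact .nil
  | a :: rest =>
    have hrest : rest.count a = 1 := by simpa using hcount a mem_cons_self
    obtain ⟨τ, z, rfl⟩ := append_of_mem (count_pos_iff.mp (by omega : 0 < rest.count a))
    have haτz : τ.count a = 0 ∧ z.count a = 0 := by simp [count_append] at hrest; omega
    have haτ : a ∉ τ := count_eq_zero.mp haτz.1
    have haz : a ∉ z := count_eq_zero.mp haτz.2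
    have hlt : ∀ b ∈ τ, a < b := fun b hb => hbetween a b <|
      ((singleton_sublist.2 hb).append (singleton_sublist.2 mem_cons_self)).cons_cons a
    have hdisj : ∀ x ∈ τ, x ∉ z := fun x hxτ hxz => lt_asymm (hlt x hxτ) <| hbetween x a <|
      (singleton_sublist.2 (mem_cons_of_mem a hxτ)).append ((singleton_sublist.2 hxz).cons_cons a)
    have hτw : τ <+ a :: (τ ++ a :: z) := (sublist_append_left τ _).cons a
    have hzw : z <+ a :: (τ ++ a :: z) :=
      ((sublist_cons_self a z).trans (sublist_append_right τ _)).cons a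
    refine .block haτ (of_count_eq_two (fun x hx => ?_) fun x y h => hbetween x y (h.trans hτw))
      (of_count_eq_two (fun x hx => ?_) fun x y h => hbetween x y (h.trans hzw))
    · have hax : a ≠ x := (ne_of_mem_of_not_mem hx haτ).symm
      simpa [count_cons, count_append, hax, count_eq_zero.2 (hdisj x hx)]
        using hcount x (by simp [hx])
    · have hax : a ≠ x := (ne_of_mem_of_not_mem hx haz).symm
      have hxτ : x ∉ τ := fun h => hdisj x h hx
      simpa [count_cons, count_append, hax, count_eq_zero.2 hxτ] using hcount x (by simp [hx])
termination_by w.length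

end Nested

theorem IsStirling.lt_of_sublist {A : Finset ℕ} {w : List ℕ} (h : IsStirling A w) {a b : ℕ}
    (hs : [a, b, a] <+ w) : a < b := by
  obtain ⟨f, hf⟩ := sublist_iff_exists_orderEmbedding_getElem?_eq.mp hs
  exact h.2 a b (f 0) (f 1) (f 2) (f.lt_iff_lt.2 Nat.zero_lt_one) (f.lt_iff_lt.2 Nat.one_lt_two)
    (hf 0).symm (hf 2).symm (hf 1).symm

theorem IsStirling.nested {A : Finset ℕ} {w : List ℕ} (h : IsStirling A w) : Nested w := by
  refine Nested.of_count_eq_two (fun a ha => ?_) fun a b => h.lt_of_sublist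
  have hcount := h.1 a
  split_ifs at hcount
  · exact hcount
  · exact absurd hcount (count_pos_iff.2 ha).ne'

def IsNestedBlock (B : List ℕ) : Prop := ∃ a τ, a ∉ τ ∧ Nested τ ∧ B = a :: (τ ++ [a])

theorem blockSplit_cons_append_cons {a : ℕ} {τ z : List ℕ} (ha : a ∉ τ) :
    blockSplit (a :: (τ ++ a :: z)) = (a :: (τ ++ [a]), z) := by
  have hidx : (τ ++ a :: z).findIdx (· = a) = τ.length := by
    rw [findIdx_append,
      findIdx_eq_length_of_false fun x hx => by simpa using ne_of_mem_of_not_mem hx ha]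
    simp [findIdx_cons]
  simp [blockSplit, hidx, take_append, drop_append]

theorem toBlocksAux_of_nested {w : List ℕ} (hw : Nested w) :
    ∀ {f : ℕ}, w.length ≤ f →
      (toBlocksAux f w).flatten = w ∧ ∀ B ∈ toBlocksAux f w, IsNestedBlock B := by
  induction hw with
  | nil => intro f _; cases f <;> simp [toBlocksAux]
  | @block a τ z ha hτ _ _ ihz =>
    intro f hf
    cases f with
    | zero => simp at hf
    | succ f =>
      have hsplit :
          toBlocksAux (f + 1) (a :: τ ++ a :: z) = (a :: (τ ++ [a])) :: toBlocksAux f z := by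
        rw [toBlocksAux.eq_3 _ _ (by simp), cons_append, blockSplit_cons_append_cons ha]
      obtain ⟨hflat, hblocks⟩ := ihz (f := f) (by simp at hf; omega)
      rw [hsplit]
      refine ⟨by simp [hflat], fun B hB => ?_⟩
      rcases mem_cons.mp hB with rfl | hB
      · exact ⟨a, τ, ha, hτ, rfl⟩
      · exact hblocks B hB

theorem toBlocks_of_nested {w : List ℕ} (hw : Nested w) :
    (toBlocks w).flatten = w ∧ ∀ B ∈ toBlocks w, IsNestedBlock B :=
  toBlocksAux_of_nested hw le_rfl

theorem Nested.flatten : ∀ {bs : List (List ℕ)}, (∀ B ∈ bs, IsNestedBlock B) → Nested bs.flatten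
  | [], _ => .nil
  | B :: bs, h => by
    obtain ⟨a, τ, ha, hτ, rfl⟩ := h B mem_cons_self
    simpa using Nested.block ha hτ (Nested.flatten fun B' hB' => h B' (mem_cons_of_mem _ hB'))

theorem splitAtDescent_eq_some : ∀ {bs : List (List ℕ)} {p : List (List ℕ) × List (List ℕ)},
    splitAtDescent bs = some p → p.1 ++ p.2 = bs
  | [], _, h | [_], _, h => by simp [splitAtDescent] at h
  | b :: b' :: rest, p, h => by
    rw [splitAtDescent] at h
    split_ifs at h
    · cases h; rfl
    · obtain ⟨q, hq, rfl⟩ := Option.map_eq_some_iff.mp h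
      simp [splitAtDescent_eq_some hq]

theorem xiAux_succ_of_some {f : ℕ} {w : List ℕ} {p : List (List ℕ) × List (List ℕ)}
    (h : splitAtDescent (toBlocks w) = some p) :
    xiAux (f + 1) w = xiAux f p.1.flatten ++ xiAux f p.2.flatten := by
  simp only [xiAux, h]

theorem xiAux_succ_of_none {f : ℕ} {w : List ℕ} {bs : List (List ℕ)} {a : ℕ} {τ : List ℕ}
    (h : splitAtDescent (toBlocks w) = none) (hbs : toBlocks w = bs ++ [a :: (τ ++ [a])]) :
    xiAux (f + 1) w = (bs.map fun B => B.headD 0 :: xiAux f (B.drop 1).dropLast).flatten ++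
      a :: a :: (bs.map (·.headD 0)).reverse ++ xiAux f τ := by
  rw [xiAux, h]
  simp [hbs, zipWith_map, zipWith_self]

theorem xiAux_nil (f : ℕ) : xiAux f [] = [] := by
  cases f <;> rfl

theorem eraseDups_cons_eq_block {g : List ℕ → List ℕ} {a : ℕ} {τ : List ℕ}
    (hg : (g τ).eraseDups = τ.eraseDups) :
    (a :: g τ).eraseDups = (a :: (τ ++ [a])).eraseDups := by
  calc (a :: g τ).eraseDups = ([a] ++ τ).eraseDups := eraseDups_append_congr (u := [a]) rfl hg
    _ = ([a] ++ τ ++ [a]).eraseDups := (eraseDups_append_of_subset (by simp)).symm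

theorem eraseDups_irreducibleImage (g : List ℕ → List ℕ) {bs : List (List ℕ)} {a : ℕ}
    {τ : List ℕ}
    (hbs : ∀ B ∈ bs, ∃ b σ, B = b :: (σ ++ [b]) ∧ (g σ).eraseDups = σ.eraseDups)
    (hτ : (g τ).eraseDups = τ.eraseDups) :
    ((bs.map fun B => B.headD 0 :: g (B.drop 1).dropLast).flatten ++
      a :: a :: (bs.map (·.headD 0)).reverse ++ g τ).eraseDups =
      (bs ++ [a :: (τ ++ [a])]).flatten.eraseDups := by
  set X := (bs.map fun B => B.headD 0 :: g (B.drop 1).dropLast).flatten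
  have hheads : a :: (bs.map (·.headD 0)).reverse ⊆ X ++ [a] := by
    intro x hx
    simp only [mem_cons, mem_reverse, mem_map] at hx
    rcases hx with rfl | ⟨B, hB, rfl⟩
    · simp
    · simp only [X, mem_append, mem_flatten, mem_map]
      exact Or.inl ⟨_, ⟨B, hB, rfl⟩, mem_cons_self⟩
  have hX : X.eraseDups = bs.flatten.eraseDups := by
    simpa using eraseDups_flatten_map_congr (g := id) fun B hB => by
      obtain ⟨b, σ, rfl, hσ⟩ := hbs B hB
      simpa using eraseDups_cons_eq_block hσ
  calc (X ++ a :: a :: (bs.map (·.headD 0)).reverse ++ g τ).eraseDups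
      = (X ++ [a] ++ a :: (bs.map (·.headD 0)).reverse ++ g τ).eraseDups := by simp
    _ = (X ++ [a] ++ g τ).eraseDups :=
        eraseDups_append_congr (eraseDups_append_of_subset hheads) rfl
    _ = (bs.flatten ++ [a] ++ τ).eraseDups :=
        eraseDups_append_congr (eraseDups_append_congr hX rfl) hτ
    _ = (bs.flatten ++ [a] ++ τ ++ [a]).eraseDups := (eraseDups_append_of_subset (by simp)).symm
    _ = (bs ++ [a :: (τ ++ [a])]).flatten.eraseDups := by simp

theorem eraseDups_xiAux : ∀ (f : ℕ) {w : List ℕ}, Nested w → (xiAux f w).eraseDups = w.eraseDups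
  | 0, _, _ => rfl
  | f + 1, w, hw => by
    obtain ⟨hflat, hblocks⟩ := toBlocks_of_nested hw
    cases hs : splitAtDescent (toBlocks w) with
    | some p =>
      have hp := splitAtDescent_eq_some hs
      have hnested : ∀ bs ⊆ toBlocks w, Nested bs.flatten := fun bs hbs =>
        Nested.flatten fun B hB => hblocks B (hbs hB)
      rw [xiAux_succ_of_some hs, ← hflat, ← hp, flatten_append]
      exact eraseDups_append_congr
        (eraseDups_xiAux f (hnested _ (hp ▸ subset_append_left _ _)))
        (eraseDups_xiAux f (hnested _ (hp ▸ subset_append_right _ _)))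
    | none =>
      rcases eq_nil_or_concat (toBlocks w) with hbs | ⟨bs, B, hbs⟩
      · rw [hbs] at hflat
        rw [← hflat]
        exact congrArg eraseDups (xiAux_nil _)
      · rw [concat_eq_append] at hbs
        obtain ⟨a, τ, -, hτ, rfl⟩ := hblocks B (by simp [hbs])
        rw [xiAux_succ_of_none hs hbs, ← hflat, hbs]
        refine eraseDups_irreducibleImage _ (fun B hB => ?_) (eraseDups_xiAux f hτ)
        obtain ⟨b, σ, -, hσ, rfl⟩ := hblocks B (by simp [hbs, hB])
        exact ⟨b, σ, rfl, eraseDups_xiAux f hσ⟩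

theorem initPerm_xiMap {w : List ℕ} (hw : Nested w) : initPerm (xiMap w) = initPerm w := by
  rw [initPerm_eq_eraseDups, initPerm_eq_eraseDups, xiMap, eraseDups_xiAux _ hw]

namespace CTree

theorem minLeaf_mem_leavesList : ∀ T : CTree, T.minLeaf ∈ T.leavesList
  | leaf _ => mem_singleton_self _
  | node _ l r => by
    rcases min_choice l.minLeaf r.minLeaf with h | h <;>
      simp [minLeaf, leavesList, h, minLeaf_mem_leavesList]

theorem eraseDups_gammaT_of_dropLast (T : CTree)
    (h : T.gammaT.dropLast.eraseDups = T.leavesList.eraseDups) :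
    T.gammaT.eraseDups = T.leavesList.eraseDups := by
  cases T with
  | leaf m => simp [gammaT, leavesList, eraseDups_cons]
  | node c l r =>
    have hmem : l.minLeaf ∈ (node c l r).gammaT.dropLast := by
      rw [← mem_eraseDups, h, mem_eraseDups]
      exact mem_append_left _ (minLeaf_mem_leavesList l)
    have hsplit : (node c l r).gammaT = (node c l r).gammaT.dropLast ++ [l.minLeaf] := by
      simp [gammaT]
    rw [hsplit, eraseDups_append_of_subset (cons_subset.2 ⟨hmem, nil_subset _⟩), h]

theorem eraseDups_dropLast_gammaT : ∀ T : CTree,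
    T.gammaT.dropLast.eraseDups = T.leavesList.eraseDups
  | leaf _ => rfl
  | node _ l r => by
    rw [gammaT, dropLast_concat, leavesList]
    exact eraseDups_append_congr (eraseDups_dropLast_gammaT l)
      (eraseDups_gammaT_of_dropLast r (eraseDups_dropLast_gammaT r))

theorem eraseDups_gammaT (T : CTree) : T.gammaT.eraseDups = T.leavesList.eraseDups :=
  eraseDups_gammaT_of_dropLast T (eraseDups_dropLast_gammaT T)

end CTree

theorem initPerm_xi_and_gammaT_general (n : ℕ) :
    (∀ w ∈ QSet n, initPerm (xiMap w) = initPerm w) ∧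
      (∀ T ∈ NorSet n, initPerm (CTree.gammaT T) = CTree.leavesList T) := by
  refine ⟨fun w hw => initPerm_xiMap (IsStirling.nested hw), fun T hT => ?_⟩
  have hnodup : T.leavesList.Nodup :=
    hT.1.nodup_iff.mpr (nodup_range.map fun _ _ => Nat.add_right_cancel)
  rw [initPerm_eq_eraseDups, CTree.eraseDups_gammaT, eraseDups_eq_self_of_nodup hnodup]

/-- `ξ` preserves the initial permutation: `init(ξ(θ)) = init(θ)` for every
Stirling permutation `θ ∈ Q_n`; and for every normalized labeled binary tree
`Υ = (T,σ) ∈ Nor_n`, the initial permutation of `γ̃(Υ)` is the sequence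
`σ = σ(1) ⋯ σ(n)` of leaf labels of `Υ` read from left to right. -/
theorem initPerm_xi_and_gammaT (n : ℕ) (hn : 1 ≤ n) :
    (∀ w ∈ QSet n, initPerm (xiMap w) = initPerm w) ∧
      (∀ T ∈ NorSet n, initPerm (CTree.gammaT T) = CTree.leavesList T) :=
  initPerm_xi_and_gammaT_general n
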